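/- Let (P, ·, [−,…,−]) be a Poisson n-Lie algebra and (B, ∘) a commutative associative algebra. Then the tensor product P ⊗ B, equipped with component-wise multiplication (x⊗y)·(x'⊗y') = (x·x')⊗(y∘y') and the n-ary bracket [x₁⊗y₁,…,xₙ⊗yₙ] = [x₁,…,xₙ]⊗(y₁∘⋯∘yₙ), is a Poisson n-Lie algebra. -/

import Mathlib

/-!
The bracket on `P ⊗ B` is the base change of `br`: the multilinear map that sends a family of
pure tensors `xᵢ ⊗ yᵢ` to `br x ⊗ ∏ yᵢ`, built by currying off one slot at a time.
Alternation, the fundamental identity and the Leibniz rule for it are all statements that are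
additive in each argument, so it suffices to check them on pure tensors, where they become the
corresponding identities for `br`, tensored with a product in the commutative algebra `B`.
The only subtle point is alternation, since `c ↦ [… c … c …]` is quadratic: antisymmetry,
checked on pure tensors, makes it additive.
-/

open scoped TensorProduct
open Function

section Families

variable {R M N : Type*} [CommSemiring R] [AddCommMonoid M] [Module R M]
  [AddCommMonoid N] [Module R N]

theorem TensorProduct.update_tmul {ι : Type*} [DecidableEq ι] (x : ι → M) (y : ι → N) (i : ι)
    (p : M) (q : N) :
    update (fun k => x k ⊗ₜ[R] y k) i (p ⊗ₜ q) = fun k => update x i p k ⊗ₜ update y i q k :=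
  funext fun k => (apply_update₂ (fun _ => TensorProduct.tmul R) x y i p q k).symm

theorem Fin.snoc_tmul {n : ℕ} (x : Fin n → M) (y : Fin n → N) (p : M) (q : N) :
    Fin.snoc (fun l => x l ⊗ₜ[R] y l) (p ⊗ₜ q)
      = fun l => Fin.snoc (α := fun _ => M) x p l ⊗ₜ Fin.snoc (α := fun _ => N) y q l := by
  ext l
  induction l using Fin.lastCases <;> simp

theorem Fin.cons_tmul {n : ℕ} (x : Fin n → M) (y : Fin n → N) (p : M) (q : N) :
    Fin.cons (p ⊗ₜ q) (fun l => x l ⊗ₜ[R] y l)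
      = fun l => Fin.cons (α := fun _ => M) p x l ⊗ₜ Fin.cons (α := fun _ => N) q y l := by
  ext l
  induction l using Fin.cases <;> simp

theorem MultilinearMap.compLinearMap_update_id_apply {ι : Type*} [DecidableEq ι]
    (f : MultilinearMap R (fun _ : ι => M) N) (i : ι) (g : M →ₗ[R] M) (v : ι → M) :
    f.compLinearMap (update (fun _ => LinearMap.id) i g) v = f (update v i (g (v i))) :=
  congr_arg f <| funext fun k => by
    rcases eq_or_ne k i with rfl | h
    · simp
    · simp [h]

end Families

theorem Fintype.prod_update_mul_self {ι A : Type*} [Fintype ι] [DecidableEq ι] [CommMonoid A]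
    (t : ι → A) (i : ι) (c : A) : ∏ k, update t i (c * t i) k = c * ∏ k, t k := by
  rw [Finset.prod_update_of_mem (Finset.mem_univ i), Finset.sdiff_singleton_eq_erase, mul_assoc,
    Finset.mul_prod_erase _ _ (Finset.mem_univ i)]

namespace TensorProduct

variable {R M N Q ι : Type*} [CommSemiring R] [AddCommMonoid M] [Module R M]
  [AddCommMonoid N] [Module R N] [AddCancelCommMonoid Q] [DecidableEq ι]

theorem eq_of_map_update_add_of_eq_piecewise_tmul (s : Finset ι)
    {f g : (ι → M ⊗[R] N) → Q}
    (hf : ∀ v, ∀ l ∈ s, ∀ a b, f (update v l (a + b)) = f (update v l a) + f (update v l b))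
    (hg : ∀ v, ∀ l ∈ s, ∀ a b, g (update v l (a + b)) = g (update v l a) + g (update v l b))
    (h : ∀ (x : ι → M) (y : ι → N) v, f (s.piecewise (fun i => x i ⊗ₜ[R] y i) v)
      = g (s.piecewise (fun i => x i ⊗ₜ[R] y i) v))
    (v : ι → M ⊗[R] N) : f v = g v := by
  induction s using Finset.induction_on generalizing f g with
  | empty => simpa using h 0 0 v
  | @insert l s hl ih =>
    suffices ∀ c, f (update v l c) = g (update v l c) by simpa using this (v l)
    intro c
    induction c using TensorProduct.induction_on with
    | zero =>
      have hf0 := hf (update v l 0) l (s.mem_insert_self l) 0 0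
      have hg0 := hg (update v l 0) l (s.mem_insert_self l) 0 0
      simp only [update_idem, add_zero, left_eq_add] at hf0 hg0
      rw [hf0, hg0]
    | tmul p q =>
      refine ih (f := fun w => f (update w l (p ⊗ₜ q))) (g := fun w => g (update w l (p ⊗ₜ q)))
        ?_ ?_ ?_
      · intro w k hk a b
        have hkl : k ≠ l := ne_of_mem_of_not_mem hk hl
        simp only [update_comm hkl]
        exact hf _ k (Finset.mem_insert_of_mem hk) a b
      · intro w k hk a b
        have hkl : k ≠ l := ne_of_mem_of_not_mem hk hl
        simp only [update_comm hkl]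
        exact hg _ k (Finset.mem_insert_of_mem hk) a b
      · intro x y w
        have hpw : s.piecewise (fun i => update x l p i ⊗ₜ[R] update y l q i) w
            = s.piecewise (fun i => x i ⊗ₜ[R] y i) w :=
          s.piecewise_congr (fun i hi => by
            rw [update_of_ne (ne_of_mem_of_not_mem hi hl), update_of_ne (ne_of_mem_of_not_mem hi hl)])
            fun _ _ => rfl
        simpa [Finset.piecewise_insert, hpw] using h (update x l p) (update y l q) w
    | add a b ha hb =>
      rw [hf v l (s.mem_insert_self l), hg v l (s.mem_insert_self l), ha, hb]

end TensorProduct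

namespace MultilinearMap

section ExtTmul

variable {R M N Q ι : Type*} [CommSemiring R] [AddCommMonoid M] [Module R M]
  [AddCommMonoid N] [Module R N] [AddCancelCommMonoid Q] [Module R Q] [Fintype ι] [DecidableEq ι]

theorem ext_tmul {f g : MultilinearMap R (fun _ : ι => M ⊗[R] N) Q}
    (h : ∀ (x : ι → M) (y : ι → N), f (fun i => x i ⊗ₜ y i) = g (fun i => x i ⊗ₜ y i)) :
    f = g := by
  ext v
  refine TensorProduct.eq_of_map_update_add_of_eq_piecewise_tmul Finset.univ
    (fun v l _ => f.map_update_add v l) (fun v l _ => g.map_update_add v l) ?_ v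
  simpa using h

end ExtTmul

section LiftBaseChange

variable {R A M Y : Type*} [CommSemiring R] [CommSemiring A] [Algebra R A]
  [AddCommMonoid M] [Module R M] [AddCommMonoid Y] [Module R Y] [Module A Y] [IsScalarTower R A Y]

instance {ι : Type*} {E : ι → Type*} [∀ i, AddCommMonoid (E i)] [∀ i, Module R (E i)] :
    IsScalarTower R A (MultilinearMap R E Y) :=
  ⟨fun r a f => by ext; exact smul_assoc r a (f _)⟩

instance {ι : Type*} {E : ι → Type*} [∀ i, AddCommMonoid (E i)] [∀ i, Module R (E i)] :
    SMulCommClass A R (MultilinearMap R E Y) :=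
  ⟨fun a r f => by ext; exact smul_comm a r (f _)⟩

variable (A) in
/-- The analogue of `LinearMap.liftBaseChange` for multilinear maps, with the scalars `A` in the
right tensor factor. -/
noncomputable def liftBaseChange : (k : ℕ) →
    MultilinearMap R (fun _ : Fin k => M) Y →ₗ[R] MultilinearMap R (fun _ : Fin k => M ⊗[R] A) Y
  | 0 => (constLinearEquivOfIsEmpty R R _ Y).toLinearMap ∘ₗ
      (constLinearEquivOfIsEmpty R R _ Y).symm.toLinearMap
  | k + 1 => (multilinearCurryLeftEquiv R _ Y).symm.toLinearMap ∘ₗ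
      TensorProduct.uncurry (.id R) M A _ ∘ₗ
      LinearMap.llcomp R M _ _ (Algebra.lsmul R R _).toLinearMap.flip ∘ₗ
      LinearMap.llcomp R M _ _ (liftBaseChange k) ∘ₗ
      (multilinearCurryLeftEquiv R _ Y).toLinearMap

theorem liftBaseChange_tmul {k : ℕ} (f : MultilinearMap R (fun _ : Fin k => M) Y)
    (x : Fin k → M) (a : Fin k → A) :
    liftBaseChange A k f (fun i => x i ⊗ₜ a i) = (∏ i, a i) • f x := by
  induction k with
  | zero => simp [liftBaseChange, Subsingleton.elim x ![]]
  | succ k ih =>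
    change a 0 • liftBaseChange A k (f.curryLeft (x 0)) (fun i => Fin.tail x i ⊗ₜ Fin.tail a i) = _
    rw [ih, curryLeft_apply, Fin.cons_self_tail, Fin.prod_univ_succ, mul_smul, Fin.tail_def]

end LiftBaseChange

section BaseChange

variable {R A M N : Type*} [CommSemiring R] [CommSemiring A] [Algebra R A]
  [AddCommMonoid M] [Module R M] [AddCommMonoid N] [Module R N] {k : ℕ}

-- `A ⊗ N`, unlike `N ⊗ A`, is an `A`-module, hence the detour through `TensorProduct.comm`.
variable (A) in
noncomputable def baseChange (f : MultilinearMap R (fun _ : Fin k => M) N) :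
    MultilinearMap R (fun _ : Fin k => M ⊗[R] A) (N ⊗[R] A) :=
  (TensorProduct.comm R A N).toLinearMap.compMultilinearMap
    (liftBaseChange A k ((TensorProduct.mk R A N 1).compMultilinearMap f))

@[simp]
theorem baseChange_tmul (f : MultilinearMap R (fun _ : Fin k => M) N) (x : Fin k → M)
    (a : Fin k → A) : f.baseChange A (fun i => x i ⊗ₜ a i) = f x ⊗ₜ ∏ i, a i := by
  simp [baseChange, liftBaseChange_tmul, TensorProduct.smul_tmul']

end BaseChange

section Alternating

variable {R A M N : Type*} [CommRing R] [CommSemiring A] [Algebra R A]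
  [AddCommGroup M] [Module R M] [AddCommGroup N] [Module R N] {k : ℕ}

theorem baseChange_update_update_swap (f : AlternatingMap R M N (Fin k)) {i j : Fin k}
    (hij : i ≠ j) (w : Fin k → M ⊗[R] A) (a b : M ⊗[R] A) :
    f.toMultilinearMap.baseChange A (update (update w i a) j b)
      = -f.toMultilinearMap.baseChange A (update (update w i b) j a) := by
  have hswap : (f.toMultilinearMap.baseChange A).domDomCongr (Equiv.swap i j)
      = -f.toMultilinearMap.baseChange A := by
    refine ext_tmul fun x y => ?_
    have := f.map_swap x hij
    simp only [domDomCongr_apply, baseChange_tmul, neg_apply]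
    rw [← TensorProduct.neg_tmul, Equiv.prod_comp]
    exact congrArg (· ⊗ₜ _) this
  have hv : (update (update w i b) j a) ∘ Equiv.swap i j = update (update w i a) j b := by
    rw [Equiv.comp_swap_eq_update, update_self, update_of_ne hij, update_self, update_idem,
      update_comm hij.symm, update_idem]
  rw [← hv, ← neg_apply, ← hswap]
  rfl

theorem baseChange_map_eq_zero_of_eq (f : AlternatingMap R M N (Fin k)) (v : Fin k → M ⊗[R] A)
    {i j : Fin k} (hv : v i = v j) (hij : i ≠ j) : f.toMultilinearMap.baseChange A v = 0 := by
  set T := f.toMultilinearMap.baseChange A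
  have hdiag : ∀ w a b, T (update (update w i (a + b)) j (a + b))
      = T (update (update w i a) j a) + T (update (update w i b) j b) := by
    intro w a b
    have hsplit : ∀ c, T (update (update w i (a + b)) j c)
        = T (update (update w i a) j c) + T (update (update w i b) j c) := by
      intro c
      rw [update_comm hij, T.map_update_add, update_comm hij.symm, update_comm hij.symm]
    rw [T.map_update_add, hsplit, hsplit, baseChange_update_update_swap f hij w b a]
    abel
  -- `w ↦ T (update w j (w i))` is additive in every slot but `j`, thanks to `hdiag`.
  have key : T (update v j (v i)) = 0 := by
    refine TensorProduct.eq_of_map_update_add_of_eq_piecewise_tmul (Finset.univ.erase j)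
      (f := fun w => T (update w j (w i))) (g := 0) ?_ (fun _ _ _ _ _ => (add_zero 0).symm) ?_ v
    · intro w l hl a b
      rcases eq_or_ne l i with rfl | hli
      · simpa only [update_self] using hdiag w a b
      · simp only [update_of_ne hli.symm, update_comm (Finset.ne_of_mem_erase hl)]
        exact T.map_update_add _ _ _ _
    · intro x y w
      simp only [Finset.piecewise_erase_univ, update_of_ne hij, update_idem,
        TensorProduct.update_tmul, T, baseChange_tmul, Pi.zero_apply]
      rw [show f.toMultilinearMap (update x j (x i)) = 0 from f.map_update_self x hij.symm,
        TensorProduct.zero_tmul]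
  rwa [hv, update_eq_self] at key

end Alternating

end MultilinearMap

namespace AlternatingMap

variable {R A M N : Type*} [CommRing R] [CommSemiring A] [Algebra R A]
  [AddCommGroup M] [Module R M] [AddCommGroup N] [Module R N] {k : ℕ}

variable (A) in
noncomputable def baseChange (f : M [⋀^Fin k]→ₗ[R] N) : (M ⊗[R] A) [⋀^Fin k]→ₗ[R] (N ⊗[R] A) :=
  { f.toMultilinearMap.baseChange A with
    map_eq_zero_of_eq' := fun v _ _ hv hij =>
      MultilinearMap.baseChange_map_eq_zero_of_eq f v hv hij }

@[simp]
theorem baseChange_tmul (f : M [⋀^Fin k]→ₗ[R] N) (x : Fin k → M) (a : Fin k → A) :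
    f.baseChange A (fun i => x i ⊗ₜ a i) = f x ⊗ₜ ∏ i, a i :=
  f.toMultilinearMap.baseChange_tmul x a

def FundamentalIdentity {n : ℕ} (br : M [⋀^Fin (n + 1)]→ₗ[R] M) : Prop :=
  ∀ (x : Fin n → M) (y : Fin (n + 1) → M),
    br (Fin.snoc x (br y)) = ∑ i, br (update y i (br (Fin.snoc x (y i))))

theorem FundamentalIdentity.baseChange {n : ℕ} {br : M [⋀^Fin (n + 1)]→ₗ[R] M}
    (h : br.FundamentalIdentity) : (br.baseChange A).FundamentalIdentity := by
  set T := br.baseChange A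
  have htmul : ∀ (x : Fin n → M) (a : Fin n → A) (y : Fin (n + 1) → M) (b : Fin (n + 1) → A),
      T (Fin.snoc (fun l => x l ⊗ₜ a l) (T fun i => y i ⊗ₜ b i))
        = ∑ i, T (update (fun i => y i ⊗ₜ b i) i (T (Fin.snoc (fun l => x l ⊗ₜ a l) (y i ⊗ₜ b i)))) := by
    intro x a y b
    simp only [T, baseChange_tmul, Fin.snoc_tmul, TensorProduct.update_tmul, Fin.prod_snoc,
      Fintype.prod_update_mul_self, h x y, TensorProduct.sum_tmul]
  have hpure_y : ∀ (x : Fin n → M ⊗[R] A) (y : Fin (n + 1) → M) (b : Fin (n + 1) → A),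
      T (Fin.snoc x (T fun i => y i ⊗ₜ b i))
        = ∑ i, T (update (fun i => y i ⊗ₜ b i) i (T (Fin.snoc x (y i ⊗ₜ b i)))) := by
    intro x y b
    set v : Fin (n + 1) → M ⊗[R] A := fun i => y i ⊗ₜ b i
    have hx : (LinearMap.applyₗ (T v)).compMultilinearMap T.curryRight
        = ∑ i, (T.toLinearMap v i ∘ₗ LinearMap.applyₗ (v i)).compMultilinearMap T.curryRight :=
      MultilinearMap.ext_tmul fun x a => by simpa using htmul x a y b
    simpa using congr($hx x)
  intro x y
  have hy : (T.curryRight x).compMultilinearMap T.toMultilinearMap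
      = ∑ i, T.toMultilinearMap.compLinearMap (update (fun _ => LinearMap.id) i (T.curryRight x)) :=
    MultilinearMap.ext_tmul fun y b => by
      simp only [LinearMap.compMultilinearMap_apply, _root_.sum_apply,
        MultilinearMap.compLinearMap_update_id_apply, MultilinearMap.curryRight_apply]
      exact hpure_y x y b
  have := congr($hy y)
  simp only [LinearMap.compMultilinearMap_apply, _root_.sum_apply,
    MultilinearMap.compLinearMap_update_id_apply, MultilinearMap.curryRight_apply] at this
  exact this

section Leibniz

variable {P : Type*} [CommRing P] [Algebra R P] {n : ℕ}

def LeibnizRule (br : P [⋀^Fin (n + 1)]→ₗ[R] P) : Prop :=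
  ∀ (u v : P) (x : Fin n → P), br (Fin.cons (u * v) x) = u * br (Fin.cons v x) + v * br (Fin.cons u x)

theorem LeibnizRule.baseChange {br : P [⋀^Fin (n + 1)]→ₗ[R] P} (h : br.LeibnizRule) :
    (br.baseChange A).LeibnizRule := by
  set T := br.baseChange A
  have htmul : ∀ (p p' : P) (a a' : A) (x : Fin n → P) (b : Fin n → A),
      T (Fin.cons ((p ⊗ₜ a) * (p' ⊗ₜ a')) fun l => x l ⊗ₜ b l)
        = (p ⊗ₜ a) * T (Fin.cons (p' ⊗ₜ a') fun l => x l ⊗ₜ b l)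
          + (p' ⊗ₜ a') * T (Fin.cons (p ⊗ₜ a) fun l => x l ⊗ₜ b l) := by
    intro p p' a a' x b
    simp only [Algebra.TensorProduct.tmul_mul_tmul, T, Fin.cons_tmul, baseChange_tmul,
      Fin.prod_cons, h p p' x, TensorProduct.add_tmul]
    congr 2 <;> ring
  have hpure_x : ∀ (u v : P ⊗[R] A) (x : Fin n → P) (b : Fin n → A),
      T (Fin.cons (u * v) fun l => x l ⊗ₜ b l)
        = u * T (Fin.cons v fun l => x l ⊗ₜ b l) + v * T (Fin.cons u fun l => x l ⊗ₜ b l) := by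
    intro u v x b
    set w : Fin n → P ⊗[R] A := fun l => x l ⊗ₜ b l
    have hcons : ∀ c, (Fin.cons c w : Fin (n + 1) → P ⊗[R] A) = update (Fin.cons 0 w) 0 c :=
      fun c => (Fin.update_cons_zero ..).symm
    have hzero : T (Fin.cons 0 w) = 0 := by
      rw [hcons]; exact T.map_update_zero _ _
    have hadd : ∀ c d, T (Fin.cons (c + d) w) = T (Fin.cons c w) + T (Fin.cons d w) := fun c d => by
      rw [hcons, T.map_update_add, ← hcons, ← hcons]
    induction u using TensorProduct.induction_on with
    | zero => simp [hzero]
    | add u₁ u₂ h₁ h₂ => rw [add_mul, hadd, hadd, h₁, h₂]; ring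
    | tmul p a =>
      induction v using TensorProduct.induction_on with
      | zero => simp [hzero]
      | add v₁ v₂ h₁ h₂ => rw [mul_add, hadd, hadd, h₁, h₂]; ring
      | tmul p' a' => exact htmul p p' a a' x b
  intro u v x
  have hx : T.toMultilinearMap.curryLeft (u * v)
      = (LinearMap.mulLeft R u).compMultilinearMap (T.toMultilinearMap.curryLeft v)
        + (LinearMap.mulLeft R v).compMultilinearMap (T.toMultilinearMap.curryLeft u) :=
    MultilinearMap.ext_tmul fun x b => by simpa using hpure_x u v x b
  have := congr($hx x)
  simp only [MultilinearMap.curryLeft_apply, _root_.add_apply,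
    LinearMap.compMultilinearMap_apply, LinearMap.mulLeft_apply] at this
  exact this

end Leibniz

end AlternatingMap

theorem tensor_poisson_nLie
    (F P B : Type*) [Field F] [CommRing P] [Algebra F P]
    [CommRing B] [Algebra F B] (m : ℕ)
    (br : AlternatingMap F P P (Fin (m + 2)))
    (hFI : ∀ (x : Fin (m + 1) → P) (y : Fin (m + 2) → P),
      br (Fin.snoc x (br y)) =
        ∑ i, br (Function.update y i (br (Fin.snoc x (y i)))))
    (hLeib : ∀ (u v : P) (x : Fin (m + 1) → P),
      br (Fin.cons (u * v) x) = u * br (Fin.cons v x) + v * br (Fin.cons u x)) :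
    ∃ brT : AlternatingMap F (P ⊗[F] B) (P ⊗[F] B) (Fin (m + 2)),
      (∀ (x : Fin (m + 2) → P) (y : Fin (m + 2) → B),
        brT (fun i => x i ⊗ₜ[F] y i) = br x ⊗ₜ[F] (∏ i, y i)) ∧
      (∀ (x : Fin (m + 1) → P ⊗[F] B) (y : Fin (m + 2) → P ⊗[F] B),
        brT (Fin.snoc x (brT y)) =
          ∑ i, brT (Function.update y i (brT (Fin.snoc x (y i))))) ∧
      (∀ (u v : P ⊗[F] B) (x : Fin (m + 1) → P ⊗[F] B),
        brT (Fin.cons (u * v) x) =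
          u * brT (Fin.cons v x) + v * brT (Fin.cons u x)) :=
  ⟨br.baseChange B, br.baseChange_tmul, AlternatingMap.FundamentalIdentity.baseChange hFI,
    AlternatingMap.LeibnizRule.baseChange hLeib⟩
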